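/- Let ℓ ≥ 6 be an integer, let L be a finite triangle-free 4-sunspot-free graph, let H be a hole in L of length t ≥ ℓ such that no hole in L has length at least ℓ and strictly less than t, and let Φ be a full ℓ-safe H-flare in L; for each h ∈ V(H) write Φ(h) = {x_h}. Then for all distinct h, h' ∈ V(H), the vertex x_h is anticomplete to {h', x_{h'}} in L; consequently the subgraph of L induced on V(H) ∪ {x_h : h ∈ V(H)} is a t-sun. -/

import Mathlib

/-!
If a pendant vertex `x i` had a neighbour `H.emb j` with `j ≠ i`, follow `H` from `i` to the
first such neighbour: this arc closed up by `x i` is a hole. Safety forces the arc to be longer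
than `ℓ` and to leave more than `ℓ` vertices of `H` outside it, so the new hole has length in
`[ℓ, |H|)`, contradicting the choice of `H`. An edge `x i x j` is excluded the same way, closing
the arc from `i` to `j` through `x j` and `x i`. With these non-adjacencies, `H` and its pendant
vertices induce a sun.
-/

open SimpleGraph

/-- A `4`-sunspot in `G`: seven pairwise distinct vertices whose induced edge set is exactly
`{x₁x₂, x₂x₃, x₃x₄, x₄x₁, x₁y₁, x₂y₂, x₃y₃}`. -/
def IsFourSunspot {V : Type} (G : SimpleGraph V) (x₁ x₂ x₃ x₄ y₁ y₂ y₃ : V) : Prop :=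
  [x₁, x₂, x₃, x₄, y₁, y₂, y₃].Nodup ∧
  G.Adj x₁ x₂ ∧ G.Adj x₂ x₃ ∧ G.Adj x₃ x₄ ∧ G.Adj x₄ x₁ ∧
  G.Adj x₁ y₁ ∧ G.Adj x₂ y₂ ∧ G.Adj x₃ y₃ ∧
  ¬ G.Adj x₁ x₃ ∧ ¬ G.Adj x₂ x₄ ∧
  ¬ G.Adj x₁ y₂ ∧ ¬ G.Adj x₁ y₃ ∧ ¬ G.Adj x₂ y₁ ∧ ¬ G.Adj x₂ y₃ ∧
  ¬ G.Adj x₃ y₁ ∧ ¬ G.Adj x₃ y₂ ∧ ¬ G.Adj x₄ y₁ ∧ ¬ G.Adj x₄ y₂ ∧ ¬ G.Adj x₄ y₃ ∧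
  ¬ G.Adj y₁ y₂ ∧ ¬ G.Adj y₁ y₃ ∧ ¬ G.Adj y₂ y₃

/-- `G` is `4`-sunspot-free if there is no `4`-sunspot in `G`. -/
def FourSunspotFree {V : Type} (G : SimpleGraph V) : Prop :=
  ∀ x₁ x₂ x₃ x₄ y₁ y₂ y₃ : V, ¬ IsFourSunspot G x₁ x₂ x₃ x₄ y₁ y₂ y₃

/-- The `t`-sun: a `t`-vertex cycle (on `Sum.inl` vertices) together with a pendant
(degree-one) neighbor `Sum.inr i` for each cycle vertex `Sum.inl i`. -/
def Sun (t : ℕ) : SimpleGraph (ZMod t ⊕ ZMod t) :=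
  SimpleGraph.fromEdgeSet
    ((Set.range fun i : ZMod t => s(Sum.inl i, Sum.inl (i + 1))) ∪
     (Set.range fun i : ZMod t => s(Sum.inl i, Sum.inr i)))

/-- `G` is `t`-sun-free: no induced subgraph of `G` is a `t`-sun. -/
def SunFree (t : ℕ) {V : Type} (G : SimpleGraph V) : Prop :=
  IsEmpty (Sun t ↪g G)

/-- The bull: a triangle `0,1,2` with pendant vertices `3` (adjacent to `0`)
and `4` (adjacent to `1`). -/
def Bull : SimpleGraph (Fin 5) :=
  SimpleGraph.fromEdgeSet {s(0, 1), s(1, 2), s(0, 2), s(0, 3), s(1, 4)}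

/-- `G` is bull-free: no induced subgraph of `G` is a bull. -/
def BullFree {V : Type} (G : SimpleGraph V) : Prop :=
  IsEmpty (Bull ↪g G)

/-- A hole in `G`: an induced cycle on at least `4` vertices, given as a graph embedding
of the cycle graph. -/
structure Hole {V : Type} (G : SimpleGraph V) where
  len : ℕ
  four_le : 4 ≤ len
  emb : SimpleGraph.cycleGraph len ↪g G

/-- The vertex set of a hole. -/
def Hole.verts {V : Type} {G : SimpleGraph V} (H : Hole G) : Set V :=
  Set.range H.emb

/-- The edge set of a hole. -/
def Hole.edges {V : Type} {G : SimpleGraph V} (H : Hole G) : Set (Sym2 V) :=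
  {e | ∃ i j : Fin H.len, (SimpleGraph.cycleGraph H.len).Adj i j ∧ e = s(H.emb i, H.emb j)}

/-- `G` is liberal: for distinct non-adjacent `x, y`, neither dominates the other. -/
def Liberal {V : Type} (G : SimpleGraph V) : Prop :=
  ∀ x y : V, x ≠ y → ¬ G.Adj x y →
    (G.neighborSet x \ G.neighborSet y).Nonempty ∧
    (G.neighborSet y \ G.neighborSet x).Nonempty

/-- `G` is non-degenerate: every vertex has degree at least `χ(G) - 1`. -/
def NonDegenerate {V : Type} (G : SimpleGraph V) : Prop :=
  ∀ v : V, G.chromaticNumber ≤ ((G.neighborSet v).ncard : ℕ∞) + 1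

/-- `G` is flapless: for every hole `H` of length at least `6` in `G`, there is no `H`-flap,
i.e. no `4`-hole sharing an edge with `H`. -/
def Flapless {V : Type} (G : SimpleGraph V) : Prop :=
  ∀ H : Hole G, 6 ≤ H.len → ∀ F : Hole G, F.len = 4 → ∀ e ∈ F.edges, e ∉ H.edges

/-- An `r`-leveling in `G`: pairwise disjoint nonempty sets `L 0, …, L r` such that every
vertex of `L i` (`i ≥ 1`) has a neighbor in `L (i-1)`, and edges only join consecutive levels. -/
def IsLeveling {V : Type} (G : SimpleGraph V) (r : ℕ) (L : ℕ → Set V) : Prop :=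
  (∀ i, i ≤ r → (L i).Nonempty) ∧
  (∀ i j, i ≤ r → j ≤ r → i ≠ j → Disjoint (L i) (L j)) ∧
  (∀ i, 1 ≤ i → i ≤ r → ∀ v ∈ L i, ∃ u ∈ L (i - 1), G.Adj u v) ∧
  (∀ i j, i ≤ r → j ≤ r → i ≠ j →
    ∀ u ∈ L i, ∀ v ∈ L j, G.Adj u v → i = j + 1 ∨ j = i + 1)

/-- `x` has no sector of length at most `2` in the hole `H`: there is no edge of `H` with both
ends adjacent to `x`, and no path of length `2` in `H` whose ends are adjacent to `x` and whose
middle vertex is not. -/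
def NoSectorLenLe2 {V : Type} (G : SimpleGraph V) (H : Hole G) (x : V) : Prop :=
  (∀ i j : Fin H.len, (SimpleGraph.cycleGraph H.len).Adj i j →
      ¬ (G.Adj x (H.emb i) ∧ G.Adj x (H.emb j))) ∧
  (∀ i j k : Fin H.len, (SimpleGraph.cycleGraph H.len).Adj i j →
      (SimpleGraph.cycleGraph H.len).Adj j k → i ≠ k →
      ¬ (G.Adj x (H.emb i) ∧ ¬ G.Adj x (H.emb j) ∧ G.Adj x (H.emb k)))

/-- `X` and `Y` are anticomplete in `G`: disjoint, with no edge between them. -/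
def Anticomplete {V : Type} (G : SimpleGraph V) (X Y : Set V) : Prop :=
  Disjoint X Y ∧ ∀ x ∈ X, ∀ y ∈ Y, ¬ G.Adj x y

/-- An `H`-flare in `G`: to each vertex `H.emb i` of the hole `H`, assign a set `Φ i` of at
most one vertex, contained in the neighborhood of `H.emb i` and disjoint from `H`. -/
structure IsFlare {V : Type} (G : SimpleGraph V) (H : Hole G) (Φ : Fin H.len → Set V) : Prop where
  subset_nbhd : ∀ i, Φ i ⊆ G.neighborSet (H.emb i) \ H.verts
  subsingleton : ∀ i, (Φ i).Subsingleton

/-- A flare is full if `|Φ i| = 1` for every `i`. -/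
def IsFullFlare {V : Type} (G : SimpleGraph V) (H : Hole G) (Φ : Fin H.len → Set V) : Prop :=
  IsFlare G H Φ ∧ ∀ i, (Φ i).Nonempty

/-- A flare `Φ` is `d`-safe: for distinct hole vertices at distance at most `d` in `H`,
`Φ(h)` and `Φ[h'] = Φ(h') ∪ {h'}` are anticomplete in `G`. -/
def DSafe {V : Type} (G : SimpleGraph V) (H : Hole G) (Φ : Fin H.len → Set V) (d : ℕ) : Prop :=
  ∀ i j : Fin H.len, i ≠ j → (SimpleGraph.cycleGraph H.len).dist i j ≤ d →
    Anticomplete G (Φ i) (Φ j ∪ {H.emb j})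

lemma Fin.val_sub_add_val_sub {n : ℕ} {u v : Fin n} (h : u ≠ v) :
    (u - v).val + (v - u).val = n := by
  rcases h.lt_or_gt with h | h
  · rw [Fin.coe_sub_iff_lt.2 h, Fin.coe_sub_iff_le.2 h.le]
    rw [Fin.lt_def] at h
    omega
  · rw [Fin.coe_sub_iff_le.2 h.le, Fin.coe_sub_iff_lt.2 h]
    rw [Fin.lt_def] at h
    omega

namespace SimpleGraph

lemma cycleGraph_adj_iff_eq_add_one {n : ℕ} [NeZero n] {u v : Fin n} :
    (cycleGraph n).Adj u v ↔ u ≠ v ∧ (v = u + 1 ∨ u = v + 1) := by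
  obtain _ | _ | n := n
  · exact u.elim0
  · simp [Fin.fin_one_eq_zero u, Fin.fin_one_eq_zero v]
  · rw [cycleGraph_adj, sub_eq_iff_eq_add, sub_eq_iff_eq_add, add_comm 1 v, add_comm 1 u]
    refine ⟨fun h => ⟨?_, h.symm⟩, fun h => h.2.symm⟩
    rintro rfl
    simp at h

lemma cycleGraph_adj_iff_val {n : ℕ} {u v : Fin n} (hn : 2 ≤ n) :
    (cycleGraph n).Adj u v ↔ u.val + 1 = v.val ∨ v.val + 1 = u.val ∨
      (u.val = 0 ∧ v.val + 1 = n) ∨ (v.val = 0 ∧ u.val + 1 = n) := by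
  rw [cycleGraph_adj']
  rcases lt_trichotomy u v with h | rfl | h
  · rw [Fin.coe_sub_iff_lt.2 h, Fin.coe_sub_iff_le.2 h.le]
    rw [Fin.lt_def] at h
    omega
  · rw [Fin.coe_sub_iff_le.2 le_rfl]
    omega
  · rw [Fin.coe_sub_iff_le.2 h.le, Fin.coe_sub_iff_lt.2 h]
    rw [Fin.lt_def] at h
    omega

def cycleGraph.rotate {n : ℕ} [NeZero n] (i : Fin n) : cycleGraph n ≃g cycleGraph n where
  toEquiv := Equiv.addRight i
  map_rel_iff' := by simp [cycleGraph_adj']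

def pathGraphEmbCycleGraph {p n : ℕ} (h : p < n) : pathGraph p ↪g cycleGraph n where
  toEmbedding := Fin.castLEEmb h.le
  map_rel_iff' {u v} := by
    have := u.isLt
    rw [Fin.castLEEmb_apply, Fin.castLEEmb_apply, cycleGraph_adj_iff_val (by omega), pathGraph_adj]
    simp only [Fin.val_castLE]
    omega

lemma cycleGraph_dist_le_val_sub {n : ℕ} [NeZero n] (i j : Fin n) :
    (cycleGraph n).dist i j ≤ (j - i).val := by
  induction hd : (j - i).val generalizing j with
  | zero =>
    rw [Fin.val_eq_zero_iff, sub_eq_zero] at hd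
    simp [hd]
  | succ d ih =>
    have hne : j - i ≠ 0 := fun h => by simp [h] at hd
    have hd' : (j - 1 - i).val = d := by
      rw [sub_right_comm, Fin.val_sub_one_of_ne_zero hne, hd, Nat.add_sub_cancel]
    have hadj : (cycleGraph n).Adj (j - 1) j := by
      refine cycleGraph_adj_iff_eq_add_one.2 ⟨fun h => ?_, Or.inl (sub_add_cancel j 1).symm⟩
      rw [h] at hd'
      omega
    calc (cycleGraph n).dist i j
        ≤ (cycleGraph n).dist i (j - 1) + (cycleGraph n).dist (j - 1) j :=
          (Connected.mk cycleGraph_preconnected).dist_triangle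
      _ ≤ d + 1 := add_le_add (ih _ hd') (dist_eq_one_iff_adj.2 hadj).le

variable {V : Type} {L : SimpleGraph V}

def pathGraphOneEmb (y : V) : pathGraph 1 ↪g L where
  toFun _ := y
  inj' _ _ _ := Subsingleton.elim _ _
  map_rel_iff' := by simp [pathGraph_adj]

@[simp] lemma pathGraphOneEmb_apply (y : V) (s : Fin 1) : pathGraphOneEmb (L := L) y s = y := rfl

def pathGraphTwoEmb {y z : V} (h : L.Adj y z) : pathGraph 2 ↪g L where
  toFun := ![y, z]
  inj' a b hab := by
    fin_cases a <;> fin_cases b <;> simp_all [h.ne, h.ne.symm]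
  map_rel_iff' {a b} := by
    show L.Adj (![y, z] a) (![y, z] b) ↔ _
    fin_cases a <;> fin_cases b <;> simp [pathGraph_adj, h, h.symm]

@[simp] lemma pathGraphTwoEmb_zero {y z : V} (h : L.Adj y z) : pathGraphTwoEmb h 0 = y := rfl

@[simp] lemma pathGraphTwoEmb_one {y z : V} (h : L.Adj y z) : pathGraphTwoEmb h 1 = z := rfl

end SimpleGraph

section Sun

variable {t : ℕ} {z w : ZMod t}

lemma sun_adj_inl_inl : (Sun t).Adj (.inl z) (.inl w) ↔ z ≠ w ∧ (w = z + 1 ∨ z = w + 1) := by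
  simp only [Sun, fromEdgeSet_adj, Set.mem_union, Set.mem_range, Sym2.eq, Sym2.rel_iff',
    Prod.mk.injEq, Prod.swap_prod_mk, Sum.inl.injEq, ne_eq, reduceCtorEq, and_false, or_false,
    exists_false]
  constructor
  · rintro ⟨⟨i, ⟨rfl, rfl⟩ | ⟨rfl, rfl⟩⟩, hne⟩
    · exact ⟨hne, Or.inl rfl⟩
    · exact ⟨hne, Or.inr rfl⟩
  · rintro ⟨hne, rfl | rfl⟩
    · exact ⟨⟨z, Or.inl ⟨rfl, rfl⟩⟩, hne⟩
    · exact ⟨⟨w, Or.inr ⟨rfl, rfl⟩⟩, hne⟩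

lemma sun_adj_inl_inr : (Sun t).Adj (.inl z) (.inr w) ↔ z = w := by
  simp [Sun, eq_comm]

lemma sun_adj_inr_inl : (Sun t).Adj (.inr z) (.inl w) ↔ z = w := by
  rw [adj_comm, sun_adj_inl_inr, eq_comm]

lemma not_sun_adj_inr_inr : ¬ (Sun t).Adj (.inr z) (.inr w) := by
  simp [Sun]

end Sun

namespace Hole

variable {V : Type} {L : SimpleGraph V}

instance neZero_len (H : Hole L) : NeZero H.len :=
  ⟨by have := H.four_le; omega⟩

theorem exists_of_pathGraph_embeddings {p c : ℕ} (P : pathGraph p ↪g L) (Q : pathGraph c ↪g L)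
    (hp : 0 < p) (hc : 0 < c) (hpc : 4 ≤ p + c) (hne : ∀ u s, P u ≠ Q s)
    (hadj : ∀ u s, L.Adj (P u) (Q s) ↔ (u.val + 1 = p ∧ s.val = 0) ∨ (u.val = 0 ∧ s.val + 1 = c)) :
    ∃ H : Hole L, H.len = p + c := by
  refine ⟨⟨p + c, hpc, ⟨⟨Fin.append P Q, fun a b hab => ?_⟩, fun {a b} => ?_⟩⟩, rfl⟩
  · induction a using Fin.addCases <;> induction b using Fin.addCases <;>
      simp only [Fin.append_left, Fin.append_right] at hab
    · rw [P.injective hab]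
    · exact absurd hab (hne _ _)
    · exact absurd hab.symm (hne _ _)
    · rw [Q.injective hab]
  · change L.Adj (Fin.append P Q a) (Fin.append P Q b) ↔ _
    rw [cycleGraph_adj_iff_val (by omega)]
    induction a using Fin.addCases with
    | left u =>
      induction b using Fin.addCases with
      | left v =>
        rw [Fin.append_left, Fin.append_left, P.map_rel_iff, pathGraph_adj]
        simp only [Fin.val_castAdd]
        have := v.isLt
        omega
      | right s =>
        rw [Fin.append_left, Fin.append_right, hadj]
        simp only [Fin.val_castAdd, Fin.val_natAdd]
        omega
    | right s =>
      induction b using Fin.addCases with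
      | left v =>
        rw [Fin.append_left, Fin.append_right, L.adj_comm, hadj]
        simp only [Fin.val_castAdd, Fin.val_natAdd]
        omega
      | right t =>
        rw [Fin.append_right, Fin.append_right, Q.map_rel_iff, pathGraph_adj]
        simp only [Fin.val_natAdd]
        have := s.isLt
        have := t.isLt
        omega

def arc (H : Hole L) (i : Fin H.len) {p : ℕ} (hp : p < H.len) : pathGraph p ↪g L :=
  H.emb.comp ((cycleGraph.rotate i).toEmbedding.comp (pathGraphEmbCycleGraph hp))

lemma arc_apply (H : Hole L) (i : Fin H.len) {p : ℕ} (hp : p < H.len) (u : Fin p) :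
    H.arc i hp u = H.emb (Fin.castLE hp.le u + i) := rfl

-- `(j - i).val` and `(i - j).val` are the lengths of the two arcs of `H` between `i` and `j`.
structure IsSafeFullFlare (H : Hole L) (l : ℕ) (x : Fin H.len → V) : Prop where
  adj : ∀ i, L.Adj (H.emb i) (x i)
  not_mem_verts : ∀ i, x i ∉ H.verts
  not_adj_of_near : ∀ ⦃i j⦄, i ≠ j → ((j - i).val ≤ l ∨ (i - j).val ≤ l) →
    ¬ L.Adj (x i) (H.emb j) ∧ ¬ L.Adj (x i) (x j)

theorem isSafeFullFlare_of_dSafe {H : Hole L} {l : ℕ} {Φ : Fin H.len → Set V}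
    {x : Fin H.len → V} (hΦ : IsFlare L H Φ) (hsafe : DSafe L H Φ l) (hx : ∀ i, Φ i = {x i}) :
    H.IsSafeFullFlare l x := by
  have hmem i : x i ∈ Φ i := by rw [hx i]; rfl
  refine ⟨fun i => (hΦ.subset_nbhd i (hmem i)).1, fun i => (hΦ.subset_nbhd i (hmem i)).2,
    fun i j hij hnear => ?_⟩
  have hdist : (cycleGraph H.len).dist i j ≤ l := by
    rcases hnear with h | h
    · exact (cycleGraph_dist_le_val_sub i j).trans h
    · exact dist_comm ▸ (cycleGraph_dist_le_val_sub j i).trans h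
  have hanti := (hsafe i j hij hdist).2 (x i) (hmem i)
  exact ⟨hanti _ (Or.inr rfl), hanti _ (Or.inl (hmem j))⟩

namespace IsSafeFullFlare

variable {H : Hole L} {l : ℕ} {x : Fin H.len → V}

theorem adj_emb_iff (hx : H.IsSafeFullFlare l x) (hl : 2 ≤ l)
    (hshortest : ∀ H' : Hole L, l ≤ H'.len → H.len ≤ H'.len) {i j : Fin H.len} :
    L.Adj (x i) (H.emb j) ↔ i = j := by
  refine ⟨fun hadj => ?_, fun h => h ▸ (hx.adj i).symm⟩
  by_contra hij
  obtain ⟨a, ⟨ha0, ha⟩, hmin⟩ := wellFounded_lt.has_min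
    {k : Fin H.len | k ≠ 0 ∧ L.Adj (x i) (H.emb (k + i))}
    ⟨j - i, sub_ne_zero.2 (Ne.symm hij), by rwa [sub_add_cancel]⟩
  have hai : a + i ≠ i := by simpa using ha0
  have hfar : ¬(a.val ≤ l ∨ (i - (a + i)).val ≤ l) := fun h => by
    simpa using (hx.not_adj_of_near hai.symm (by simpa using h)).1 ha
  have hsum := Fin.val_sub_add_val_sub hai
  rw [add_sub_cancel_right] at hsum
  have hp : a.val + 1 < H.len := by omega
  have hsector : ∀ k : Fin H.len, k ≤ a → (L.Adj (x i) (H.emb (k + i)) ↔ k = 0 ∨ k = a) := by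
    intro k hk
    refine ⟨fun h => ?_, ?_⟩
    · by_contra hk'
      push Not at hk'
      exact hmin k ⟨hk'.1, h⟩ (lt_of_le_of_ne hk hk'.2)
    · rintro (rfl | rfl)
      · simpa using (hx.adj i).symm
      · exact ha
  obtain ⟨H', hH'⟩ := exists_of_pathGraph_embeddings (H.arc i hp) (pathGraphOneEmb (x i))
    (by omega) one_pos (by omega)
    (fun u s h => hx.not_mem_verts i ⟨_, by rw [← pathGraphOneEmb_apply (x i) s, ← h, arc_apply]⟩)
    (fun u s => by
      rw [arc_apply, pathGraphOneEmb_apply, L.adj_comm, hsector _ (Fin.le_def.2 (by simp; omega)),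
        ← Fin.val_eq_zero_iff, Fin.ext_iff]
      simp only [Fin.val_castLE, Fin.val_eq_zero s, and_true]
      omega)
  have := hshortest H' (by omega)
  omega

theorem not_adj (hx : H.IsSafeFullFlare l x) (hl : 3 ≤ l)
    (hshortest : ∀ H' : Hole L, l ≤ H'.len → H.len ≤ H'.len) {i j : Fin H.len} (hij : i ≠ j) :
    ¬ L.Adj (x i) (x j) := by
  intro hadj
  have hfar : ¬((j - i).val ≤ l ∨ (i - j).val ≤ l) := fun h => (hx.not_adj_of_near hij h).2 hadj
  have hsum := Fin.val_sub_add_val_sub hij.symm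
  have hp : (j - i).val + 1 < H.len := by omega
  have hemb {i' j' : Fin H.len} := hx.adj_emb_iff (by omega) hshortest (i := i') (j := j')
  obtain ⟨H', hH'⟩ := exists_of_pathGraph_embeddings (H.arc i hp) (pathGraphTwoEmb hadj.symm)
    (by omega) two_pos (by omega)
    (fun u s h => by
      fin_cases s <;> exact hx.not_mem_verts _ ⟨_, by simpa [arc_apply] using h⟩)
    (fun u s => by
      rw [arc_apply, L.adj_comm]
      fin_cases s
      · simp only [Fin.zero_eta, pathGraphTwoEmb_zero, hemb]
        rw [eq_comm, ← eq_sub_iff_add_eq, Fin.ext_iff]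
        simp
      · simp only [Fin.mk_one, pathGraphTwoEmb_one, hemb]
        rw [eq_comm, add_eq_right, ← Fin.val_eq_zero_iff]
        simp)
  have := hshortest H' (by omega)
  omega

theorem anticomplete (hx : H.IsSafeFullFlare l x) (hl : 3 ≤ l)
    (hshortest : ∀ H' : Hole L, l ≤ H'.len → H.len ≤ H'.len) {i j : Fin H.len} (hij : i ≠ j) :
    Anticomplete L {x i} {H.emb j, x j} := by
  have hemb {i' j' : Fin H.len} := hx.adj_emb_iff (by omega) hshortest (i := i') (j := j')
  refine ⟨Set.disjoint_singleton_left.2 ?_, ?_⟩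
  · rintro (h | h)
    · exact hx.not_mem_verts i ⟨j, h.symm⟩
    · exact hij (hemb.1 (h ▸ (hx.adj j).symm))
  · rintro _ rfl _ (rfl | rfl)
    · exact fun h => hij (hemb.1 h)
    · exact hx.not_adj hl hshortest hij

end IsSafeFullFlare

theorem exists_sun_embedding (H : Hole L) (x : Fin H.len → V)
    (hadj : ∀ i, L.Adj (H.emb i) (x i))
    (hanti : ∀ i j, i ≠ j → Anticomplete L {x i} {H.emb j, x j}) :
    ∃ e : Sun H.len ↪g L, Set.range e = H.verts ∪ Set.range x := by
  have hxemb {i j} : L.Adj (x i) (H.emb j) ↔ i = j := by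
    refine ⟨fun h => ?_, fun h => h ▸ (hadj i).symm⟩
    by_contra hij
    exact (hanti i j hij).2 _ rfl _ (Or.inl rfl) h
  have hxx {i j} : ¬ L.Adj (x i) (x j) := by
    by_cases hij : i = j
    · exact hij ▸ L.irrefl
    · exact (hanti i j hij).2 _ rfl _ (Or.inr rfl)
  have hx_ne {i j} : x i ≠ H.emb j := by
    by_cases hij : i = j
    · exact hij ▸ (hadj i).ne.symm
    · exact fun h => Set.disjoint_singleton_left.1 (hanti i j hij).1 (Or.inl h)
  have hxinj : Function.Injective x := fun i j h => by
    by_contra hij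
    exact Set.disjoint_singleton_left.1 (hanti i j hij).1 (Or.inr h)
  let φ := (ZMod.finEquiv H.len).symm
  have hsucc {z w : ZMod H.len} : φ w = φ z + 1 ↔ w = z + 1 := by
    rw [← map_one φ, ← map_add, φ.injective.eq_iff]
  refine ⟨⟨⟨Sum.elim (H.emb ∘ φ) (x ∘ φ), ?_⟩, ?_⟩, ?_⟩
  · exact (H.emb.injective.comp φ.injective).sumElim (hxinj.comp φ.injective)
      fun _ _ => hx_ne.symm
  · rintro (z | z) (w | w) <;>
      simp only [Function.Embedding.coeFn_mk, Sum.elim_inl, Sum.elim_inr, Function.comp_apply]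
    · rw [H.emb.map_rel_iff, cycleGraph_adj_iff_eq_add_one, sun_adj_inl_inl, hsucc, hsucc,
        φ.injective.ne_iff]
    · rw [L.adj_comm, hxemb, φ.injective.eq_iff, sun_adj_inl_inr, eq_comm]
    · rw [hxemb, φ.injective.eq_iff, sun_adj_inr_inl]
    · simp only [hxx, not_sun_adj_inr_inr]
  · change Set.range (Sum.elim _ _) = _
    rw [Set.Sum.elim_range, EquivLike.range_comp, EquivLike.range_comp]
    rfl

end Hole

theorem stmt_17_general {V : Type} (l : ℕ) (hl : 6 ≤ l) (L : SimpleGraph V)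
    (H : Hole L)
    (hshortest : ∀ H' : Hole L, l ≤ H'.len → H.len ≤ H'.len)
    (Φ : Fin H.len → Set V) (hΦ : IsFlare L H Φ) (hsafe : DSafe L H Φ l)
    (x : Fin H.len → V) (hx : ∀ i, Φ i = {x i}) :
    (∀ i j : Fin H.len, i ≠ j → Anticomplete L {x i} {H.emb j, x j}) ∧
    ∃ e : Sun H.len ↪g L, Set.range e = H.verts ∪ Set.range x := by
  have hflare := Hole.isSafeFullFlare_of_dSafe hΦ hsafe hx
  have hanti (i j : Fin H.len) (hij : i ≠ j) := hflare.anticomplete (by omega) hshortest hij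
  exact ⟨hanti, H.exists_sun_embedding x hflare.adj hanti⟩

/-- Let `ℓ ≥ 6`, let `L` be a finite triangle-free `4`-sunspot-free graph,
let `H` be a hole in `L` of length `t ≥ ℓ` that is shortest among holes of length at least
`ℓ`, and let `Φ` be a full `ℓ`-safe `H`-flare with `Φ i = {x i}`. Then for all distinct
`i, j`, the vertex `x i` is anticomplete to `{H.emb j, x j}` in `L`; consequently the
subgraph of `L` induced on `V(H) ∪ {x i : i}` is a `t`-sun. -/
theorem stmt_17 {V : Type} [Fintype V] (l : ℕ) (hl : 6 ≤ l) (L : SimpleGraph V)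
    (htri : L.CliqueFree 3)
    (hspot : FourSunspotFree L)
    (H : Hole L) (hHlen : l ≤ H.len)
    (hshortest : ∀ H' : Hole L, l ≤ H'.len → H.len ≤ H'.len)
    (Φ : Fin H.len → Set V) (hΦ : IsFlare L H Φ) (hsafe : DSafe L H Φ l)
    (x : Fin H.len → V) (hx : ∀ i, Φ i = {x i}) :
    (∀ i j : Fin H.len, i ≠ j → Anticomplete L {x i} {H.emb j, x j}) ∧
    ∃ e : Sun H.len ↪g L, Set.range e = H.verts ∪ Set.range x :=
  stmt_17_general l hl L H hshortest Φ hΦ hsafe x hx
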